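/- arXiv:2008.12911 — 2 statements merged into one kernel-verified Lean document; each statement's English description precedes it below -/
import Mathlib

section
/- Let s ∈ (0,1), α ∈ ℝ, m₁,…,m_k ∈ ℝ all nonzero, and let b = (b₁,…,b_k) ∈ (ℝ²)^k have pairwise distinct components. Then b is a critical point of J (i.e. the total derivative of J at b vanishes) if and only if for every j ∈ {1,…,k}: α b_j = -(Γ(2-s)/(2^{2s-3} π Γ(s))) Σ_{i≠j} m_i (b_i - b_j)/|b_i - b_j|^{4-2s}; that is, critical points of J correspond to solutions of the rotating point-vortex system. -/
/-!
Both parts of `J` are smooth away from collisions: the quadratic term has gradient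
`α m_j b_j` in the `j`-th point, and `‖x_i - x_j‖ ^ p` has gradient `p ‖d‖ ^ (p - 2) d`
in `x_i`, `d = x_i - x_j`. Since every unordered pair occurs twice in the double sum, the
`j`-th partial gradient of `J` at `b` is
`m_j (α b_j + 2 p C Σ_{i ≠ j} m_i ‖b_j - b_i‖ ^ (p - 2) (b_j - b_i))`,
where `C = Γ(1-s) / (π 2^(2s-1) Γ(s))` is the interaction constant.
For `p = 2s - 2`, the functional equation `Γ(2 - s) = (1 - s) Γ(1 - s)` turns `2 p C` into
`-Γ(2-s) / (2^(2s-3) π Γ(s))`, and as `m_j ≠ 0` the gradient vanishes exactly when the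
vortex equation holds at `b_j`.
-/

open Real Finset RealInnerProductSpace

noncomputable section

/-- The plane `ℝ²` with the Euclidean norm. -/
abbrev E2 := EuclideanSpace ℝ (Fin 2)

/-- For `a = (a₁, a₂)`, `perp a = a^⊥ = (a₂, -a₁)`. -/
def perp (a : E2) : E2 := WithLp.toLp 2 ![a 1, -(a 0)]

/-- `e₁ = (1,0)`. -/
def e1 : E2 := WithLp.toLp 2 ![1, 0]

/-- `e₂ = (0,1)`. -/
def e2 : E2 := WithLp.toLp 2 ![0, 1]

/-- `K_s = Γ(2-s) / (2^(2s-1) π Γ(s))`. -/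
def Ks (s : ℝ) : ℝ := Real.Gamma (2 - s) / (2 ^ (2*s - 1) * Real.pi * Real.Gamma s)

/-- Counterclockwise rotation of the plane by angle `θ`. -/
def rot (θ : ℝ) (a : E2) : E2 :=
  WithLp.toLp 2 ![Real.cos θ * a 0 - Real.sin θ * a 1, Real.sin θ * a 0 + Real.cos θ * a 1]

theorem hasFDerivAt_norm_rpow_of_ne_zero {E : Type*} [NormedAddCommGroup E]
    [InnerProductSpace ℝ E] {y : E} (hy : y ≠ 0) (p : ℝ) :
    HasFDerivAt (fun y : E => ‖y‖ ^ p) ((p * ‖y‖ ^ (p - 2)) • innerSL ℝ y) y := by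
  have hsq : ‖y‖ ^ 2 ≠ 0 := pow_ne_zero _ (norm_ne_zero_iff.mpr hy)
  have h := (hasStrictFDerivAt_norm_sq y).hasFDerivAt.rpow_const (p := p / 2) (Or.inl hsq)
  have hpow : ∀ (x : E) (r : ℝ), (‖x‖ ^ 2 : ℝ) ^ r = ‖x‖ ^ (2 * r) := fun x r => by
    rw [← Real.rpow_natCast, ← Real.rpow_mul (norm_nonneg x), Nat.cast_ofNat]
  simp only [hpow, mul_div_cancel₀ p two_ne_zero] at h
  convert h using 1
  ext v
  simp only [smul_apply, innerSL_apply_apply, smul_eq_mul]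
  rw [show 2 * (p / 2 - 1) = p - 2 by ring]
  ring

section PairInteraction

variable {ι E : Type*} [Fintype ι] [NormedAddCommGroup E] [InnerProductSpace ℝ E]

/-- `ι → E` carries the sup norm, so it is not an inner product space; derivatives on it are
represented by their partial gradients `g` through this form instead of by Riesz duality. -/
def sumInnerSL (g : ι → E) : (ι → E) →L[ℝ] ℝ :=
  ∑ j, (innerSL ℝ (g j)).comp (ContinuousLinearMap.proj j)

@[simp]
theorem sumInnerSL_apply (g v : ι → E) : sumInnerSL g v = ∑ j, ⟪g j, v j⟫ := by
  simp [sumInnerSL]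

theorem sumInnerSL_add (g h : ι → E) : sumInnerSL (g + h) = sumInnerSL g + sumInnerSL h := by
  ext v
  simp [inner_add_left, sum_add_distrib]

theorem sumInnerSL_smul (c : ℝ) (g : ι → E) : sumInnerSL (c • g) = c • sumInnerSL g := by
  ext v
  simp [inner_smul_left, mul_sum]

theorem sumInnerSL_eq_zero_iff [DecidableEq ι] {g : ι → E} : sumInnerSL g = 0 ↔ g = 0 := by
  refine ⟨fun h => funext fun j => ?_, fun h => by ext; simp [h]⟩
  have hj := congrArg (· (Pi.single j (g j))) h
  simpa [Pi.single_apply, apply_ite] using hj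

theorem hasFDerivAt_sum_mul_norm_sq (m : ι → ℝ) (b : ι → E) :
    HasFDerivAt (fun x : ι → E => ∑ i, m i * ‖x i‖ ^ 2)
      (sumInnerSL fun i => (2 * m i) • b i) b := by
  have h := HasFDerivAt.fun_sum (u := univ) fun i _ =>
    ((ContinuousLinearMap.proj (R := ℝ) (φ := fun _ : ι => E) i).hasFDerivAt (x := b)).norm_sq
      |>.const_mul (m i)
  refine h.congr_fderiv ?_
  ext v
  simp only [sumInnerSL_apply, _root_.sum_apply, smul_apply, ContinuousLinearMap.comp_apply,
    innerSL_apply_apply, ContinuousLinearMap.proj_apply, smul_eq_mul, nsmul_eq_mul, Nat.cast_ofNat, real_inner_smul_left]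
  exact sum_congr rfl fun i _ => by ring

theorem sum_sdiff_inner_sub_of_antisymm [DecidableEq ι] (a : ι → ι → E)
    (ha : ∀ i j, a j i = -a i j) (v : ι → E) :
    ∑ i, ∑ j ∈ univ \ {i}, ⟪a i j, v i - v j⟫ = ∑ i, ⟪(2 : ℝ) • ∑ j ∈ univ \ {i}, a i j, v i⟫ := by
  have hswap : ∑ i, ∑ j ∈ univ \ {i}, ⟪a i j, v j⟫ = -∑ i, ∑ j ∈ univ \ {i}, ⟪a i j, v i⟫ := by
    rw [sum_comm' (s' := fun j => univ \ {j}) (t' := univ) fun i j => by simp [eq_comm],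
      ← sum_neg_distrib]
    refine sum_congr rfl fun i _ => ?_
    rw [← sum_neg_distrib]
    exact sum_congr rfl fun j _ => by rw [ha j i, inner_neg_left, neg_neg]
  simp only [inner_sub_right, sum_sub_distrib, hswap, sub_neg_eq_add, two_smul, inner_add_left,
    sum_inner, sum_add_distrib]

theorem hasFDerivAt_sum_sdiff_mul_norm_sub_rpow [DecidableEq ι] (m : ι → ℝ) {b : ι → E}
    (hb : Function.Injective b) (p : ℝ) :
    HasFDerivAt (fun x : ι → E => ∑ i, ∑ j ∈ univ \ {i}, m i * m j * ‖x i - x j‖ ^ p)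
      (sumInnerSL fun i =>
        (2 * p * m i) • ∑ j ∈ univ \ {i}, (m j * ‖b i - b j‖ ^ (p - 2)) • (b i - b j)) b := by
  have h := HasFDerivAt.fun_sum (u := univ) fun i _ => HasFDerivAt.fun_sum (u := univ \ {i})
    fun j hj => by
      have hij : b i - b j ≠ 0 := sub_ne_zero.mpr (hb.ne (by simpa [eq_comm] using hj))
      exact ((hasFDerivAt_norm_rpow_of_ne_zero hij p).comp b
        ((ContinuousLinearMap.proj (R := ℝ) (φ := fun _ : ι => E) i -
          ContinuousLinearMap.proj j).hasFDerivAt)).const_mul (m i * m j)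
  refine h.congr_fderiv ?_
  set a : ι → ι → E := fun i j => (m i * m j * p * ‖b i - b j‖ ^ (p - 2)) • (b i - b j)
  have ha : ∀ i j, a j i = -a i j := fun i j => by
    simp only [a]
    rw [norm_sub_rev (b j), ← neg_sub (b i) (b j), smul_neg, mul_comm (m j)]
  ext v
  calc _ = ∑ i, ∑ j ∈ univ \ {i}, ⟪a i j, v i - v j⟫ := by
        simp only [_root_.sum_apply, smul_apply, ContinuousLinearMap.comp_apply,
          sub_apply, ContinuousLinearMap.proj_apply, innerSL_apply_apply,
          smul_eq_mul, real_inner_smul_left, a]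
        exact sum_congr rfl fun i _ => sum_congr rfl fun j _ => by ring
    _ = _ := by
        rw [sum_sdiff_inner_sub_of_antisymm a ha, sumInnerSL_apply]
        simp only [a, smul_sum, smul_smul]
        exact sum_congr rfl fun i _ => by
          congr 1; exact sum_congr rfl fun j _ => by congr 1; ring

theorem hasFDerivAt_vortex_energy [DecidableEq ι] (α C p : ℝ) (m : ι → ℝ) {b : ι → E}
    (hb : Function.Injective b) :
    HasFDerivAt (fun x : ι → E => (α / 2) * ∑ i, m i * ‖x i‖ ^ 2
        + C * ∑ i, ∑ j ∈ univ \ {i}, m i * m j * ‖x i - x j‖ ^ p)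
      (sumInnerSL fun i => m i •
        (α • b i + (2 * p * C) • ∑ j ∈ univ \ {i}, (m j * ‖b i - b j‖ ^ (p - 2)) • (b i - b j))) b := by
  refine ((hasFDerivAt_sum_mul_norm_sq m b).const_mul (α / 2)).add
    ((hasFDerivAt_sum_sdiff_mul_norm_sub_rpow m hb p).const_mul C) |>.congr_fderiv ?_
  rw [← sumInnerSL_smul, ← sumInnerSL_smul, ← sumInnerSL_add]
  congr 1
  ext1 i
  simp only [Pi.add_apply, Pi.smul_apply]
  module

theorem sum_sdiff_mul_norm_rpow_neg_smul_sub [DecidableEq ι] (m : ι → ℝ) (b : ι → E) (r : ℝ)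
    (j : ι) :
    ∑ i ∈ univ \ {j}, (m i * ‖b j - b i‖ ^ (-r)) • (b j - b i)
      = -∑ i ∈ univ \ {j}, (m i / ‖b i - b j‖ ^ r) • (b i - b j) := by
  rw [← sum_neg_distrib]
  refine sum_congr rfl fun i _ => ?_
  rw [Real.rpow_neg (norm_nonneg _), norm_sub_rev, ← neg_sub (b i) (b j), smul_neg, div_eq_mul_inv]

end PairInteraction

theorem two_mul_exponent_mul_gamma_ratio {s : ℝ} (hs : s ≠ 1) :
    2 * (-(2 - 2 * s)) * (Real.Gamma (1 - s) / (Real.pi * 2 ^ (2 * s - 1) * Real.Gamma s))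
      = -(Real.Gamma (2 - s) / (2 ^ (2 * s - 3) * Real.pi * Real.Gamma s)) := by
  have hΓ : Real.Gamma (2 - s) = (1 - s) * Real.Gamma (1 - s) := by
    rw [← Real.Gamma_add_one (sub_ne_zero.mpr hs.symm)]
    ring_nf
  have hpow : (2 : ℝ) ^ (2 * s - 1) = 2 ^ (2 * s - 3) * 4 := by
    rw [show 2 * s - 1 = (2 * s - 3) + 2 by ring, Real.rpow_add two_pos]
    norm_num
  rw [hΓ, hpow]
  ring

theorem statement13_general (s : ℝ) (hs : s ∈ Set.Ioo (0:ℝ) 1) (k : ℕ) (α : ℝ)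
    (m : Fin k → ℝ) (hm : ∀ i, m i ≠ 0) (b : Fin k → E2) (hb : Function.Injective b)
    (J : (Fin k → E2) → ℝ)
    (hJ : ∀ x : Fin k → E2, J x = (α/2) * ∑ i, m i * ‖x i‖ ^ 2
        + (Real.Gamma (1-s) / (Real.pi * 2 ^ (2*s-1) * Real.Gamma s)) *
            ∑ i, ∑ j ∈ Finset.univ \ {i}, m i * m j * ‖x i - x j‖ ^ (-(2 - 2*s))) :
    fderiv ℝ J b = 0 ↔
      ∀ j : Fin k, α • b j
        = -((Real.Gamma (2-s) / (2 ^ (2*s-3) * Real.pi * Real.Gamma s)) •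
            ∑ i ∈ Finset.univ \ {j}, (m i / ‖b i - b j‖ ^ (4 - 2*s)) • (b i - b j)) := by
  have hJb := (hasFDerivAt_vortex_energy α _ _ m hb).congr_of_eventuallyEq (.of_forall hJ)
  rw [hJb.fderiv, sumInnerSL_eq_zero_iff, funext_iff]
  refine forall_congr' fun j => ?_
  rw [Pi.zero_apply, smul_eq_zero, or_iff_right (hm j), add_eq_zero_iff_eq_neg,
    two_mul_exponent_mul_gamma_ratio hs.2.ne, show -(2 - 2 * s) - 2 = -(4 - 2 * s) by ring,
    sum_sdiff_mul_norm_rpow_neg_smul_sub, smul_neg, neg_smul, neg_neg]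

/-- for nonzero intensities, a configuration with pairwise distinct points is a
critical point of `J` iff it solves the rotating point-vortex system:
`α b_j = -(Γ(2-s)/(2^{2s-3} π Γ(s))) Σ_{i≠j} m_i (b_i - b_j)/|b_i - b_j|^{4-2s}` for all `j`. -/
theorem statement13 (s : ℝ) (hs : s ∈ Set.Ioo (0:ℝ) 1) (k : ℕ) (hk : 1 ≤ k) (α : ℝ)
    (m : Fin k → ℝ) (hm : ∀ i, m i ≠ 0) (b : Fin k → E2) (hb : Function.Injective b)
    (J : (Fin k → E2) → ℝ)
    (hJ : ∀ x : Fin k → E2, J x = (α/2) * ∑ i, m i * ‖x i‖ ^ 2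
        + (Real.Gamma (1-s) / (Real.pi * 2 ^ (2*s-1) * Real.Gamma s)) *
            ∑ i, ∑ j ∈ Finset.univ \ {i}, m i * m j * ‖x i - x j‖ ^ (-(2 - 2*s))) :
    fderiv ℝ J b = 0 ↔
      ∀ j : Fin k, α • b j
        = -((Real.Gamma (2-s) / (2 ^ (2*s-3) * Real.pi * Real.Gamma s)) •
            ∑ i ∈ Finset.univ \ {j}, (m i / ‖b i - b j‖ ^ (4 - 2*s)) • (b i - b j)) :=
  statement13_general s hs k α m hm b hb J hJ
end
end

section
/- Let s ∈ (0,1), α ∈ ℝ, m₁,…,m_k ∈ ℝ, and let b = (b₁,…,b_k) ∈ (ℝ²)^k have pairwise distinct components and be a critical point of J (the total derivative of J at b vanishes). Let v = (b₁^⊥, b₂^⊥, …, b_k^⊥) ∈ (ℝ²)^k. Then the second derivative of J at b annihilates v, i.e. D²J(b)[v, w] = 0 for every w ∈ (ℝ²)^k. In particular, if not all b_j are zero, every critical point of J is degenerate (the Hessian of J has nontrivial kernel). -/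
open Real Finset RealInnerProductSpace

noncomputable section

/-!
`J` depends on `b` only through the lengths `|b_i|` and `|b_i - b_j|`, and `a + t a^⊥`, `a - t a^⊥`
have the same length because `a ⊥ a^⊥`. Hence `t ↦ J(y + t y^⊥)` is even and `DJ(y)[y^⊥] = 0` for
every `y` near `b`. Differentiating this identity at `b` in a direction `w` gives
`D²J(b)[w, b^⊥] + DJ(b)[w^⊥] = 0`; at a critical point the second term vanishes, and the symmetry
of `D²J(b)` finishes the proof.
-/

open Topology Filter

section Calculus

variable {𝕜 E F : Type*} [NontriviallyNormedField 𝕜] [NormedAddCommGroup E] [NormedSpace 𝕜 E]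
  [NormedAddCommGroup F] [NormedSpace 𝕜 F]

theorem fderiv_apply_eq_zero_of_even [CharZero 𝕜] {f : E → F} {x v : E}
    (hf : DifferentiableAt 𝕜 f x) (heven : ∀ t : 𝕜, f (x + t • v) = f (x - t • v)) :
    fderiv 𝕜 f x v = 0 := by
  have hplus : HasDerivAt (fun t : 𝕜 => f (x + t • v)) (fderiv 𝕜 f x v) 0 := by
    simpa [Function.comp_def] using hf.hasFDerivAt.comp_hasDerivAt_of_eq (0 : 𝕜)
      (((hasDerivAt_id (0 : 𝕜)).smul_const v).const_add x) (by simp)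
  have hminus : HasDerivAt (fun t : 𝕜 => f (x - t • v)) (-fderiv 𝕜 f x v) 0 := by
    simpa [Function.comp_def] using hf.hasFDerivAt.comp_hasDerivAt_of_eq (0 : 𝕜)
      (((hasDerivAt_id (0 : 𝕜)).smul_const v).const_sub x) (by simp)
  rw [funext heven] at hplus
  have htwo : (2 : 𝕜) • fderiv 𝕜 f x v = 0 := by
    rw [two_smul, eq_neg_iff_add_eq_zero.mp (hplus.unique hminus)]
  exact (smul_eq_zero.mp htwo).resolve_left two_ne_zero

theorem fderiv_fderiv_apply_eq_zero_of_fderiv_apply_eq_zero [IsRCLikeNormedField 𝕜]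
    {f : E → F} {x : E} (A : E →L[𝕜] E) (hf : ContDiffAt 𝕜 2 f x)
    (hA : ∀ᶠ y in 𝓝 x, fderiv 𝕜 f y (A y) = 0) (hcrit : fderiv 𝕜 f x = 0) (w : E) :
    fderiv 𝕜 (fderiv 𝕜 f) x (A x) w = 0 := by
  have hf' : ∀ᶠ y in 𝓝 x, HasFDerivAt f (fderiv 𝕜 f y) y :=
    (hf.eventually (by simp)).mono fun y hy => (hy.differentiableAt (by norm_num)).hasFDerivAt
  have hf'' : HasFDerivAt (fderiv 𝕜 f) (fderiv 𝕜 (fderiv 𝕜 f) x) x :=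
    ((hf.fderiv_right (m := 1) (by norm_num)).differentiableAt one_ne_zero).hasFDerivAt
  have hderiv : (fderiv 𝕜 f x).comp A + (fderiv 𝕜 (fderiv 𝕜 f) x).flip (A x) = 0 :=
    (hf''.clm_apply A.hasFDerivAt).unique
    ((hasFDerivAt_const (0 : F) x).congr_of_eventuallyEq hA)
  rw [second_derivative_symmetric_of_eventually hf' hf'']
  simpa [hcrit] using congrArg (· w) hderiv

end Calculus

theorem Function.Injective.eventually_nhds {ι X : Type*} [Finite ι] [TopologicalSpace X]
    [T2Space X] {x : ι → X} (hx : Function.Injective x) :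
    ∀ᶠ y in 𝓝 x, Function.Injective y := by
  have hne : ∀ᶠ y in 𝓝 x, ∀ i j, i ≠ j → y i ≠ y j := by
    simp only [eventually_all]
    exact fun i j hij => (isOpen_ne_fun (continuous_apply i) (continuous_apply j)).mem_nhds
      (hx.ne hij)
  exact hne.mono fun y h i j hij => not_imp_not.mp (h i j) hij

def perpL : E2 →L[ℝ] E2 :=
  LinearMap.toContinuousLinearMap
    { toFun := perp
      map_add' a b := by ext i; fin_cases i <;> simp [perp]; ring
      map_smul' c a := by ext i; fin_cases i <;> simp [perp] }

def perpPi {ι : Type*} : (ι → E2) →L[ℝ] (ι → E2) :=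
  ContinuousLinearMap.piMap fun _ => perpL

theorem perp_sub (a b : E2) : perp (a - b) = perp a - perp b := map_sub perpL a b

theorem norm_add_neg_smul_perp (a : E2) (t : ℝ) : ‖a + (-t) • perp a‖ = ‖a + t • perp a‖ := by
  simp only [EuclideanSpace.norm_eq, Fin.sum_univ_two, perp, PiLp.add_apply, PiLp.smul_apply,
    Matrix.cons_val_zero, Matrix.cons_val_one, smul_eq_mul, Real.norm_eq_abs, sq_abs]
  ring_nf

section Energy

variable {k : ℕ}

def energy (α c p : ℝ) (m : Fin k → ℝ) (y : Fin k → E2) : ℝ :=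
  (α/2) * ∑ i, m i * ‖y i‖ ^ 2 + c * ∑ i, ∑ j ∈ univ \ {i}, m i * m j * ‖y i - y j‖ ^ p

theorem energy_add_smul_perpPi (α c p : ℝ) (m : Fin k → ℝ) (y : Fin k → E2) (t : ℝ) :
    energy α c p m (y + t • perpPi y) = energy α c p m (y - t • perpPi y) := by
  have hcoord (σ : ℝ) (i : Fin k) : (y + σ • perpPi y) i = y i + σ • perp (y i) := rfl
  have hdiff (σ : ℝ) (i j : Fin k) : (y i + σ • perp (y i)) - (y j + σ • perp (y j))
      = (y i - y j) + σ • perp (y i - y j) := by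
    rw [perp_sub]
    module
  conv_rhs => rw [sub_eq_add_neg, ← neg_smul]
  simp only [energy, hcoord, hdiff, norm_add_neg_smul_perp]

theorem contDiffAt_energy (α c p : ℝ) (m : Fin k → ℝ) {y : Fin k → E2}
    (hy : Function.Injective y) {n : WithTop ℕ∞} : ContDiffAt ℝ n (energy α c p m) y := by
  have happ (i : Fin k) : ContDiff ℝ n (fun y : Fin k → E2 => y i) := contDiff_apply ℝ E2 i
  unfold energy
  refine ContDiffAt.add ?_ ?_
  · refine contDiffAt_const.mul (ContDiffAt.sum fun i _ => contDiffAt_const.mul ?_)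
    exact (happ i).contDiffAt.norm_sq ℝ
  · refine contDiffAt_const.mul (ContDiffAt.sum fun i _ => ContDiffAt.sum fun j hj => ?_)
    have hyij : y i - y j ≠ 0 := sub_ne_zero.mpr (hy.ne (by simpa [eq_comm] using hj))
    exact contDiffAt_const.mul ((((happ i).sub (happ j)).contDiffAt.norm ℝ hyij).rpow_const_of_ne
      (norm_ne_zero_iff.mpr hyij))

theorem fderiv_energy_apply_perpPi (α c p : ℝ) (m : Fin k → ℝ) {y : Fin k → E2}
    (hy : Function.Injective y) : fderiv ℝ (energy α c p m) y (perpPi y) = 0 :=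
  fderiv_apply_eq_zero_of_even
    ((contDiffAt_energy α c p m hy (n := 1)).differentiableAt one_ne_zero)
    (energy_add_smul_perpPi α c p m y)

end Energy

theorem statement17_general (s : ℝ) (k : ℕ) (α : ℝ)
    (m : Fin k → ℝ) (b : Fin k → E2) (hb : Function.Injective b)
    (J : (Fin k → E2) → ℝ)
    (hJ : ∀ x : Fin k → E2, J x = (α/2) * ∑ i, m i * ‖x i‖ ^ 2
        + (Real.Gamma (1-s) / (Real.pi * 2 ^ (2*s-1) * Real.Gamma s)) *
            ∑ i, ∑ j ∈ Finset.univ \ {i}, m i * m j * ‖x i - x j‖ ^ (-(2 - 2*s)))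
    (hcrit : fderiv ℝ J b = 0)
    (v : Fin k → E2) (hv : v = fun i => perp (b i)) :
    ∀ w : Fin k → E2, fderiv ℝ (fderiv ℝ J) b v w = 0 := by
  obtain rfl : J = energy α _ _ m := funext hJ
  subst hv
  exact fderiv_fderiv_apply_eq_zero_of_fderiv_apply_eq_zero perpPi (contDiffAt_energy _ _ _ m hb)
    (hb.eventually_nhds.mono fun y hy => fderiv_energy_apply_perpPi _ _ _ m hy) hcrit

/-- at a critical point `b` of `J` with pairwise distinct components, the second
derivative of `J` annihilates the direction `v = (b₁^⊥, …, b_k^⊥)`: `D²J(b)[v, w] = 0` for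
every `w`. In particular, if not all `b_j` vanish, the critical point is degenerate. -/
theorem statement17 (s : ℝ) (hs : s ∈ Set.Ioo (0:ℝ) 1) (k : ℕ) (hk : 1 ≤ k) (α : ℝ)
    (m : Fin k → ℝ) (b : Fin k → E2) (hb : Function.Injective b)
    (J : (Fin k → E2) → ℝ)
    (hJ : ∀ x : Fin k → E2, J x = (α/2) * ∑ i, m i * ‖x i‖ ^ 2
        + (Real.Gamma (1-s) / (Real.pi * 2 ^ (2*s-1) * Real.Gamma s)) *
            ∑ i, ∑ j ∈ Finset.univ \ {i}, m i * m j * ‖x i - x j‖ ^ (-(2 - 2*s)))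
    (hcrit : fderiv ℝ J b = 0)
    (v : Fin k → E2) (hv : v = fun i => perp (b i)) :
    ∀ w : Fin k → E2, fderiv ℝ (fderiv ℝ J) b v w = 0 :=
  statement17_general s k α m b hb J hJ hcrit v hv
end
end
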